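/- Let γ : S¹ → ℝ² be a smooth closed immersed planar curve with turning number 0 satisfying the symmetry γ(−x) = R γ(x) for all x ∈ S¹, where R is the reflection (y¹,y²) ↦ (−y¹,y²) and S¹ = [−1,1]/∼. Then γ(0) and γ(±1) lie on the vertical axis {0}×ℝ, ∂ₓγ⁽¹⁾(0) ≠ 0 and ∂ₓγ⁽¹⁾(±1) ≠ 0, and there exists h ∈ (0,1) with γ(h) = γ(−h) ∈ {0}×ℝ. -/

import Mathlib

open Real

noncomputable section

/-- Euclidean norm of a vector in `ℝ × ℝ`. -/
def euclNorm (v : ℝ × ℝ) : ℝ := Real.sqrt (v.1 ^ 2 + v.2 ^ 2)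

/-- Hyperbolic arc-length derivative `∂ₛ = (γ⁽²⁾/|∂ₓγ|) ∂ₓ` applied to a vector field
along the curve `γ` in the upper half-plane. -/
def sderiv (γ X : ℝ → ℝ × ℝ) (x : ℝ) : ℝ × ℝ :=
  ((γ x).2 / euclNorm (deriv γ x)) • deriv X x

/-- Hyperbolic unit tangent `∂ₛγ`. -/
def sTang (γ : ℝ → ℝ × ℝ) : ℝ → ℝ × ℝ := sderiv γ γ

/-- The covariant derivative `∇_{∂ₓγ} X` in the hyperbolic upper half-plane,
in coordinates. -/
def covD (γ X : ℝ → ℝ × ℝ) (x : ℝ) : ℝ × ℝ :=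
  ((deriv X x).1 - ((X x).1 * (deriv γ x).2 + (X x).2 * (deriv γ x).1) / (γ x).2,
   (deriv X x).2 + ((X x).1 * (deriv γ x).1 - (X x).2 * (deriv γ x).2) / (γ x).2)

/-- The covariant derivative `∇ₛ X = (1/|∂ₓγ|_g) ∇_{∂ₓγ} X` along `γ`. -/
def covS (γ X : ℝ → ℝ × ℝ) (x : ℝ) : ℝ × ℝ :=
  ((γ x).2 / euclNorm (deriv γ x)) • covD γ X x

/-- The hyperbolic curvature vector `κ⃗ = ∇ₛ ∂ₛγ`. -/
def kvec (γ : ℝ → ℝ × ℝ) (x : ℝ) : ℝ × ℝ := covS γ (sTang γ) x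

/-- Hyperbolic inner product `⟨a,b⟩_g = ⟨a,b⟩/(γ⁽²⁾)²` at the point `γ x`. -/
def gdot (γ : ℝ → ℝ × ℝ) (a b : ℝ × ℝ) (x : ℝ) : ℝ :=
  (a.1 * b.1 + a.2 * b.2) / (γ x).2 ^ 2

/-- Hyperbolic unit normal `n = J ∂ₛγ` along `γ`. -/
def hNormal (γ : ℝ → ℝ × ℝ) (x : ℝ) : ℝ × ℝ :=
  ((γ x).2 / euclNorm (deriv γ x)) • (-(deriv γ x).2, (deriv γ x).1)

/-- Scalar hyperbolic geodesic curvature `κ = ⟨κ⃗, n⟩_g`. -/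
def hcurv (γ : ℝ → ℝ × ℝ) (x : ℝ) : ℝ := gdot γ (kvec γ x) (hNormal γ x) x

/-- Euclidean scalar curvature of a planar curve. -/
def ecurv (γ : ℝ → ℝ × ℝ) (x : ℝ) : ℝ :=
  ((deriv γ x).1 * (deriv (deriv γ) x).2 - (deriv γ x).2 * (deriv (deriv γ) x).1) /
    euclNorm (deriv γ x) ^ 3

/-- Hyperbolic arc-length element `|∂ₓγ| / γ⁽²⁾`. -/
def dsFactor (γ : ℝ → ℝ × ℝ) (x : ℝ) : ℝ := euclNorm (deriv γ x) / (γ x).2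

/-- Hyperbolic length of a closed curve parametrized over `[0, P]`. -/
def hyperLength (γ : ℝ → ℝ × ℝ) (P : ℝ) : ℝ := ∫ x in (0:ℝ)..P, dsFactor γ x

/-- Total hyperbolic curvature `∫ κ ds` over `[0, P]`. -/
def totalHypCurv (γ : ℝ → ℝ × ℝ) (P : ℝ) : ℝ :=
  ∫ x in (0:ℝ)..P, hcurv γ x * dsFactor γ x

/-- Euclidean total curvature `∫ κ_{ℝ²} ds_{ℝ²}` over `[0, P]`. -/
def totalEuclCurv (γ : ℝ → ℝ × ℝ) (P : ℝ) : ℝ :=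
  ∫ x in (0:ℝ)..P, ecurv γ x * euclNorm (deriv γ x)


open Set Filter Topology

lemma hasDerivAt_fst' {f : ℝ → ℝ × ℝ} {f' : ℝ × ℝ} {x : ℝ} (h : HasDerivAt f f' x) :
    HasDerivAt (fun y => (f y).1) f'.1 x := by
  exact ((ContinuousLinearMap.fst ℝ ℝ ℝ).hasFDerivAt.comp_hasDerivAt x h)

lemma hasDerivAt_snd' {f : ℝ → ℝ × ℝ} {f' : ℝ × ℝ} {x : ℝ} (h : HasDerivAt f f' x) :
    HasDerivAt (fun y => (f y).2) f'.2 x := by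
  exact ((ContinuousLinearMap.snd ℝ ℝ ℝ).hasFDerivAt.comp_hasDerivAt x h)

lemma euclNorm_pos' {v : ℝ × ℝ} (hv : v ≠ 0) : 0 < euclNorm v := by
  apply Real.sqrt_pos.2
  rcases eq_or_ne v.1 0 with h1 | h1
  · have h2 : v.2 ≠ 0 := by
      intro h2; exact hv (Prod.ext h1 h2)
    have := sq_nonneg v.1
    have := pow_pos (abs_pos.2 h2) 2
    nlinarith [sq_abs v.2]
  · nlinarith [sq_nonneg v.2, pow_pos (abs_pos.2 h1) 2, sq_abs v.1]

lemma sq_euclNorm' (v : ℝ × ℝ) : euclNorm v ^ 2 = v.1 ^ 2 + v.2 ^ 2 :=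
  Real.sq_sqrt (by positivity)

lemma exists_interior_zero {f : ℝ → ℝ} {d0 d1 : ℝ} (hc : Continuous f)
    (h0 : f 0 = 0) (h1 : f 1 = 0)
    (hd0 : HasDerivAt f d0 0) (hd1 : HasDerivAt f d1 1)
    (hp0 : 0 < d0) (hp1 : 0 < d1) :
    ∃ h ∈ Set.Ioo (0:ℝ) 1, f h = 0 := by
  have hs0 : Tendsto (slope f 0) (𝓝[≠] 0) (𝓝 d0) := hasDerivAt_iff_tendsto_slope.1 hd0
  have hev0 : ∀ᶠ x in 𝓝[≠] (0:ℝ), 0 < slope f 0 x := hs0.eventually (eventually_gt_nhds hp0)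
  have hle0 : 𝓝[>] (0:ℝ) ≤ 𝓝[≠] (0:ℝ) := nhdsWithin_mono _ (fun x hx => ne_of_gt hx)
  have hmem0 : Set.Ioo (0:ℝ) (1/2) ∈ 𝓝[>] (0:ℝ) :=
    Ioo_mem_nhdsGT_of_mem ⟨le_refl _, by norm_num⟩
  obtain ⟨a, ha1, ha2⟩ := ((hev0.filter_mono hle0).and
    (eventually_of_mem hmem0 (fun x hx => hx))).exists
  have haIoo : a ∈ Set.Ioo (0:ℝ) (1/2) := ha2
  have hfa : 0 < f a := by
    have := ha1
    rw [slope_def_field] at this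
    have ha0 : (0:ℝ) < a := haIoo.1
    rw [h0] at this
    have : 0 < f a / a := by simpa using this
    exact (div_pos_iff.1 this).resolve_right (fun h => absurd ha0 (not_lt.2 h.2.le)) |>.1
  have hs1 : Tendsto (slope f 1) (𝓝[≠] 1) (𝓝 d1) := hasDerivAt_iff_tendsto_slope.1 hd1
  have hev1 : ∀ᶠ x in 𝓝[≠] (1:ℝ), 0 < slope f 1 x := hs1.eventually (eventually_gt_nhds hp1)
  have hle1 : 𝓝[<] (1:ℝ) ≤ 𝓝[≠] (1:ℝ) := nhdsWithin_mono _ (fun x hx => ne_of_lt hx)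
  have hmem1 : Set.Ioo (1/2:ℝ) 1 ∈ 𝓝[<] (1:ℝ) :=
    Ioo_mem_nhdsLT_of_mem ⟨by norm_num, le_refl _⟩
  obtain ⟨b, hb1, hb2⟩ := ((hev1.filter_mono hle1).and
    (eventually_of_mem hmem1 (fun x hx => hx))).exists
  have hbIoo : b ∈ Set.Ioo (1/2:ℝ) 1 := hb2
  have hfb : f b < 0 := by
    have hb1' := hb1
    rw [slope_def_field, h1, sub_zero] at hb1'
    have hb0 : b - 1 < 0 := by linarith [hbIoo.2]
    by_contra hcon
    push_neg at hcon
    have : f b / (b - 1) ≤ 0 := div_nonpos_of_nonneg_of_nonpos hcon hb0.le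
    linarith
  have hab : a ≤ b := by linarith [haIoo.2, hbIoo.1]
  have := intermediate_value_Ioo' hab hc.continuousOn (f := f)
  have h0mem : (0:ℝ) ∈ Set.Ioo (f b) (f a) := ⟨hfb, hfa⟩
  obtain ⟨h, hmem, hfh⟩ := this h0mem
  exact ⟨h, ⟨lt_of_lt_of_le haIoo.1 hmem.1.le, lt_of_le_of_lt hmem.2.le hbIoo.2⟩, hfh⟩


/-- a smooth closed immersed planar curve `γ : [−1,1]/∼ → ℝ²` with
turning number `0` and the symmetry `γ(−x) = (−γ⁽¹⁾(x), γ⁽²⁾(x))` satisfies: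
`γ(0)` and `γ(±1)` lie on the vertical axis, `∂ₓγ⁽¹⁾(0) ≠ 0`, `∂ₓγ⁽¹⁾(±1) ≠ 0`,
and there is `h ∈ (0,1)` with `γ(h) = γ(−h) ∈ {0}×ℝ`. -/
theorem symmetric_zero_turning_curve
    (γ : ℝ → ℝ × ℝ)
    (hper : Function.Periodic γ 2)
    (hsm : ContDiff ℝ (⊤ : ℕ∞) γ)
    (himm : ∀ x, deriv γ x ≠ 0)
    (hsym : ∀ x : ℝ, γ (-x) = (-(γ x).1, (γ x).2))
    (hturn : (∫ x in (-1:ℝ)..1, ecurv γ x * euclNorm (deriv γ x)) = 0) :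
    (γ 0).1 = 0 ∧ (γ 1).1 = 0 ∧ (γ (-1)).1 = 0 ∧
      (deriv γ 0).1 ≠ 0 ∧ (deriv γ 1).1 ≠ 0 ∧ (deriv γ (-1)).1 ≠ 0 ∧
      ∃ h ∈ Set.Ioo (0:ℝ) 1, γ h = γ (-h) ∧ (γ h).1 = 0 := by

  classical
  have hsmi : ContDiff ℝ (↑(⊤:ℕ∞)) γ := hsm.of_le (by simp)
  have hdiff : Differentiable ℝ γ := hsm.differentiable (by simp)
  have hsm' : ContDiff ℝ (↑(⊤:ℕ∞)) (deriv γ) := (contDiff_infty_iff_deriv.mp hsmi).2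
  have hdiff' : Differentiable ℝ (deriv γ) := hsm'.differentiable (by simp)
  have hcont' : Continuous (deriv γ) := hdiff'.continuous
  have hcont'' : Continuous (deriv (deriv γ)) :=
    ((contDiff_infty_iff_deriv.mp hsm').2).continuous
  -- first derivative symmetry
  have hsymfun : (fun x => γ (-x)) = fun x => (-(γ x).1, (γ x).2) := funext hsym
  have hsym' : ∀ x, deriv γ (-x) = ((deriv γ x).1, -(deriv γ x).2) := by
    intro x
    have h1 : deriv (fun y => γ (-y)) x = -deriv γ (-x) := deriv_comp_neg γ x
    have h2 : HasDerivAt (fun y => ((-(γ y).1, (γ y).2) : ℝ × ℝ))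
        (-(deriv γ x).1, (deriv γ x).2) x :=
      HasDerivAt.prodMk ((hasDerivAt_fst' (hdiff x).hasDerivAt).neg) (hasDerivAt_snd' (hdiff x).hasDerivAt)
    rw [hsymfun, h2.deriv] at h1
    have := congrArg Neg.neg h1
    simp only [neg_neg] at this
    rw [← this, Prod.neg_mk, neg_neg]
  -- second derivative symmetry
  have hsym'fun : (fun x => deriv γ (-x)) = fun x => ((deriv γ x).1, -(deriv γ x).2) :=
    funext hsym'
  have hsym'' : ∀ x, deriv (deriv γ) (-x) =
      (-(deriv (deriv γ) x).1, (deriv (deriv γ) x).2) := by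
    intro x
    have h1 : deriv (fun y => deriv γ (-y)) x = -deriv (deriv γ) (-x) := deriv_comp_neg (deriv γ) x
    have h2 : HasDerivAt (fun y => (((deriv γ y).1, -(deriv γ y).2) : ℝ × ℝ))
        ((deriv (deriv γ) x).1, -(deriv (deriv γ) x).2) x :=
      HasDerivAt.prodMk (hasDerivAt_fst' (hdiff' x).hasDerivAt)
        ((hasDerivAt_snd' (hdiff' x).hasDerivAt).neg)
    rw [hsym'fun, h2.deriv] at h1
    have := congrArg Neg.neg h1
    simp only [neg_neg] at this
    rw [← this, Prod.neg_mk, neg_neg]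
  -- periodicity of deriv
  have hper' : ∀ x, deriv γ (x + 2) = deriv γ x := by
    intro x
    have hfun : (fun y => γ (y + 2)) = γ := funext hper
    calc deriv γ (x + 2) = deriv (fun y => γ (y + 2)) x := (deriv_comp_add_const γ 2 x).symm
      _ = deriv γ x := by rw [hfun]
  -- point values
  have hγm1 : γ (-1) = γ 1 := by
    have := hper (-1); norm_num at this; exact this.symm
  have hγ0 : (γ 0).1 = 0 := by
    have h := hsym 0; rw [neg_zero] at h
    have := congrArg Prod.fst h; simp at this; linarith
  have hγ1 : (γ 1).1 = 0 := by
    have h := hsym 1; rw [hγm1] at h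
    have := congrArg Prod.fst h; simp at this; linarith
  have hγm1' : (γ (-1)).1 = 0 := by rw [hγm1]; exact hγ1
  have hdm1 : deriv γ (-1) = deriv γ 1 := by
    have := hper' (-1); norm_num at this; exact this.symm
  have hd20 : (deriv γ 0).2 = 0 := by
    have h := hsym' 0; rw [neg_zero] at h
    have := congrArg Prod.snd h; simp at this; linarith
  have hd21 : (deriv γ 1).2 = 0 := by
    have h := hsym' 1; rw [hdm1] at h
    have := congrArg Prod.snd h; simp at this; linarith
  have hne : ∀ x, (deriv γ x).2 = 0 → (deriv γ x).1 ≠ 0 := by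
    intro x h2 h1
    exact himm x (by rw [Prod.ext_iff]; exact ⟨by simpa using h1, by simpa using h2⟩)
  have hd10 : (deriv γ 0).1 ≠ 0 := hne 0 hd20
  have hd11 : (deriv γ 1).1 ≠ 0 := hne 1 hd21
  have hd1m1 : (deriv γ (-1)).1 ≠ 0 := by rw [hdm1]; exact hd11
  -- the integrand and its evenness
  set F : ℝ → ℝ := fun x => ecurv γ x * euclNorm (deriv γ x) with hF
  have hnpos : ∀ x, 0 < euclNorm (deriv γ x) := fun x => euclNorm_pos' (himm x)
  have hN : Continuous (fun x => euclNorm (deriv γ x)) :=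
    Real.continuous_sqrt.comp (((hcont'.fst).pow 2).add ((hcont'.snd).pow 2))
  have hec : Continuous (ecurv γ) := by
    unfold ecurv
    exact ((hcont'.fst.mul hcont''.snd).sub (hcont'.snd.mul hcont''.fst)).div (hN.pow 3)
      (fun x => pow_ne_zero 3 (hnpos x).ne')
  have hFcont : Continuous F := hec.mul hN
  have hNeven : ∀ x, euclNorm (deriv γ (-x)) = euclNorm (deriv γ x) := by
    intro x
    rw [hsym' x]
    simp [euclNorm]
  have hFeven : ∀ x, F (-x) = F x := by
    intro x
    show ecurv γ (-x) * euclNorm (deriv γ (-x)) = ecurv γ x * euclNorm (deriv γ x)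
    unfold ecurv
    rw [hNeven x, hsym' x, hsym'' x]
    dsimp only
    ring
  -- the integral over [0,1] vanishes
  have hhalf : (∫ x in (0:ℝ)..1, F x) = 0 := by
    have hneg : (∫ x in (-1:ℝ)..0, F x) = ∫ x in (0:ℝ)..1, F x := by
      have h := intervalIntegral.integral_comp_neg (a := (0:ℝ)) (b := 1) (f := F)
      simp only [neg_zero] at h
      rw [← h]
      exact intervalIntegral.integral_congr (fun x _ => hFeven x)
    have hsplit : (∫ x in (-1:ℝ)..0, F x) + ∫ x in (0:ℝ)..1, F x
        = ∫ x in (-1:ℝ)..1, F x :=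
      intervalIntegral.integral_add_adjacent_intervals
        (hFcont.intervalIntegrable _ _) (hFcont.intervalIntegrable _ _)
    rw [hneg] at hsplit
    have hturn' : (∫ x in (-1:ℝ)..1, F x) = 0 := hturn
    linarith
  -- complexified tangent
  set c : ℝ → ℂ := fun x => ((deriv γ x).1 : ℂ) + ((deriv γ x).2 : ℂ) * Complex.I with hc
  have hcD : ∀ x, HasDerivAt c
      (((deriv (deriv γ) x).1 : ℂ) + ((deriv (deriv γ) x).2 : ℂ) * Complex.I) x := fun x =>
    ((hasDerivAt_fst' (hdiff' x).hasDerivAt).ofReal_comp).add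
      (((hasDerivAt_snd' (hdiff' x).hasDerivAt).ofReal_comp).mul_const Complex.I)
  set α : ℝ → ℝ := fun t =>
    ((deriv γ t).1 * (deriv (deriv γ) t).1 + (deriv γ t).2 * (deriv (deriv γ) t).2) /
      euclNorm (deriv γ t) ^ 2 with hα
  have hαcont : Continuous α :=
    ((hcont'.fst.mul hcont''.fst).add (hcont'.snd.mul hcont''.snd)).div (hN.pow 2)
      (fun x => pow_ne_zero 2 (hnpos x).ne')
  set θ : ℝ → ℝ := fun x => ∫ t in (0:ℝ)..x, F t with hθ
  set A : ℝ → ℝ := fun x => ∫ t in (0:ℝ)..x, α t with hA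
  have hθD : ∀ x, HasDerivAt θ (F x) x := fun x =>
    (hFcont.integral_hasStrictDerivAt 0 x).hasDerivAt
  have hAD : ∀ x, HasDerivAt A (α x) x := fun x =>
    (hαcont.integral_hasStrictDerivAt 0 x).hasDerivAt
  -- key pointwise identity
  have hkey : ∀ x, ((deriv (deriv γ) x).1 : ℂ) + ((deriv (deriv γ) x).2 : ℂ) * Complex.I
      = ((α x : ℂ) + (F x : ℂ) * Complex.I) * c x := by
    intro x
    have hn := hnpos x
    have hn2 : euclNorm (deriv γ x) ^ 2 = (deriv γ x).1 ^ 2 + (deriv γ x).2 ^ 2 :=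
      sq_euclNorm' (deriv γ x)
    have hpq : (deriv γ x).1 ^ 2 + (deriv γ x).2 ^ 2 ≠ 0 := by rw [← hn2]; positivity
    have hFx : F x = ((deriv γ x).1 * (deriv (deriv γ) x).2 -
        (deriv γ x).2 * (deriv (deriv γ) x).1) / ((deriv γ x).1 ^ 2 + (deriv γ x).2 ^ 2) := by
      show ecurv γ x * euclNorm (deriv γ x) = _
      unfold ecurv
      rw [show euclNorm (deriv γ x) ^ 3
          = ((deriv γ x).1 ^ 2 + (deriv γ x).2 ^ 2) * euclNorm (deriv γ x) by
        rw [pow_succ, hn2]]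
      field_simp
    have hαx : α x = ((deriv γ x).1 * (deriv (deriv γ) x).1 +
        (deriv γ x).2 * (deriv (deriv γ) x).2) / ((deriv γ x).1 ^ 2 + (deriv γ x).2 ^ 2) := by
      show ((deriv γ x).1 * (deriv (deriv γ) x).1 + (deriv γ x).2 * (deriv (deriv γ) x).2) /
        euclNorm (deriv γ x) ^ 2 = _
      rw [hn2]
    apply Complex.ext
    · simp only [hc, Complex.add_re, Complex.ofReal_re, Complex.mul_re, Complex.I_re,
        Complex.ofReal_im, Complex.I_im, Complex.add_im, Complex.mul_im]
      rw [hFx, hαx]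
      field_simp
      ring
    · simp only [hc, Complex.add_re, Complex.ofReal_re, Complex.mul_re, Complex.I_re,
        Complex.ofReal_im, Complex.I_im, Complex.add_im, Complex.mul_im]
      rw [hFx, hαx]
      field_simp
      ring
  -- the function W is constant
  set B : ℝ → ℂ := fun x => (A x : ℂ) + (θ x : ℂ) * Complex.I with hB
  have hBD : ∀ x, HasDerivAt B ((α x : ℂ) + (F x : ℂ) * Complex.I) x := fun x =>
    ((hAD x).ofReal_comp).add (((hθD x).ofReal_comp).mul_const Complex.I)
  set W : ℝ → ℂ := fun x => c x * Complex.exp (-B x) with hW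
  have hWD : ∀ x, HasDerivAt W 0 x := by
    intro x
    have h1 := (hcD x).mul ((hBD x).neg).cexp
    refine HasDerivAt.congr_deriv (f := W) h1 ?_
    rw [hkey x]
    ring
  have hWconst : W 1 = W 0 :=
    is_const_of_deriv_eq_zero (fun x => (hWD x).differentiableAt)
      (fun x => (hWD x).deriv) 1 0
  have hA0 : A 0 = 0 := intervalIntegral.integral_same
  have hθ0 : θ 0 = 0 := intervalIntegral.integral_same
  have hθ1 : θ 1 = 0 := hhalf
  have hc1 : c 1 = c 0 * Complex.exp ((A 1 : ℂ)) := by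
    have h : c 1 * Complex.exp (-(A 1 : ℂ)) = c 0 := by
      have := hWconst
      simp only [hW, hB, hA0, hθ0, hθ1, Complex.ofReal_zero, zero_mul, add_zero,
        neg_zero, Complex.exp_zero, mul_one] at this
      exact this
    have := congrArg (· * Complex.exp ((A 1 : ℂ))) h
    simpa [mul_assoc, ← Complex.exp_add] using this
  have hre : (deriv γ 1).1 = (deriv γ 0).1 * Real.exp (A 1) := by
    have := congrArg Complex.re hc1
    rw [← Complex.ofReal_exp] at this
    simpa [hc, Complex.add_re, Complex.mul_re, Complex.ofReal_re, Complex.ofReal_im,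
      Complex.I_re, Complex.I_im, Complex.add_im, Complex.mul_im, Complex.exp_ofReal_re] using this
  -- intermediate value argument
  have hfD : ∀ x, HasDerivAt (fun y => (γ y).1) ((deriv γ x).1) x := fun x =>
    hasDerivAt_fst' (hdiff x).hasDerivAt
  have hfc : Continuous (fun y => (γ y).1) := hdiff.continuous.fst
  have hivt : ∃ h ∈ Set.Ioo (0:ℝ) 1, (γ h).1 = 0 := by
    rcases lt_or_gt_of_ne hd10 with hneg | hpos
    · have h1neg : (deriv γ 1).1 < 0 := by
        rw [hre]
        exact mul_neg_of_neg_of_pos hneg (Real.exp_pos _)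
      obtain ⟨h, hmem, hval⟩ := exists_interior_zero (f := fun y => -(γ y).1)
        hfc.neg (by simp [hγ0]) (by simp [hγ1]) ((hfD 0).neg) ((hfD 1).neg)
        (by linarith) (by linarith)
      exact ⟨h, hmem, by linarith [neg_eq_zero.mp hval]⟩
    · have h1pos : 0 < (deriv γ 1).1 := by
        rw [hre]
        exact mul_pos hpos (Real.exp_pos _)
      obtain ⟨h, hmem, hval⟩ := exists_interior_zero (f := fun y => (γ y).1)
        hfc hγ0 hγ1 (hfD 0) (hfD 1) hpos h1pos
      exact ⟨h, hmem, hval⟩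
  obtain ⟨h, hmem, hzero⟩ := hivt
  refine ⟨hγ0, hγ1, hγm1', hd10, hd11, hd1m1, h, hmem, ?_, hzero⟩
  rw [hsym h]
  exact Prod.ext_iff.2 ⟨by simp [hzero], rfl⟩


end
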